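/- The GF(2)-subspaces W_i = span(β₁, ..., β_i) determined by a Cantor basis (β₁, ..., β_{2^L}) of GF(2^{2^L}) are independent of the choice of the Cantor basis: if (β₁, ..., β_{2^L}) and (γ₁, ..., γ_{2^L}) are two Cantor bases, then span(β₁,...,β_i) = span(γ₁,...,γ_i) for all i. -/

import Mathlib

/-!
Over `GF(2)` the Artin–Schreier map `φ x = x ^ 2 - x` is linear, and in a field its kernel is
`GF(2) = span {1}`, so `dim ker φ ^ i ≤ i`. A Cantor basis is a Jordan chain of `φ`
(`φ β₁ = 0`, `φ βⱼ₊₁ = βⱼ`), hence `span (β₁, …, βᵢ) ⊆ ker φ ^ i`, and the left side already has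
dimension `i`. So `span (β₁, …, βᵢ) = ker φ ^ i` for every Cantor basis.
-/

open Module Submodule LinearMap

section FinrankKer

variable {k V W U : Type*} [Field k] [AddCommGroup V] [Module k V] [AddCommGroup W] [Module k W]
  [AddCommGroup U] [Module k U] [FiniteDimensional k V] [FiniteDimensional k W]

theorem LinearMap.finrank_ker_comp_le (f : V →ₗ[k] W) (g : W →ₗ[k] U) :
    finrank k (ker (g ∘ₗ f)) ≤ finrank k (ker g) + finrank k (ker f) := by
  set r := f.domRestrict (ker (g ∘ₗ f))
  have hrange : range r ≤ ker g := by
    rintro _ ⟨x, rfl⟩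
    exact x.2
  have hker : (ker r).map (ker (g ∘ₗ f)).subtype ≤ ker f := by
    rintro _ ⟨x, hx, rfl⟩
    exact hx
  calc finrank k (ker (g ∘ₗ f)) = finrank k (range r) + finrank k (ker r) :=
        r.finrank_range_add_finrank_ker.symm
    _ ≤ finrank k (ker g) + finrank k (ker f) := by
        gcongr
        · exact finrank_mono hrange
        · rw [← finrank_map_subtype_eq]
          exact finrank_mono hker

theorem Module.End.finrank_ker_pow_le (f : Module.End k V) (n : ℕ) :
    finrank k (ker (f ^ n)) ≤ n * finrank k (ker f) := by
  induction n with
  | zero => simp [Module.End.one_eq_id]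
  | succ n ih =>
    calc finrank k (ker (f ^ (n + 1))) = finrank k (ker ((f ^ n) ∘ₗ f)) := by
          rw [pow_succ, Module.End.mul_eq_comp]
      _ ≤ finrank k (ker (f ^ n)) + finrank k (ker f) := finrank_ker_comp_le f (f ^ n)
      _ ≤ (n + 1) * finrank k (ker f) := by rw [Nat.succ_mul]; omega

end FinrankKer

section JordanChain

variable {k V : Type*} [Field k] [AddCommGroup V] [Module k V]

theorem Module.End.pow_succ_apply_eq_zero_of_chain {n : ℕ} {v : Fin n → V} {f : Module.End k V}
    (hbot : ∀ h : 0 < n, f (v ⟨0, h⟩) = 0)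
    (hchain : ∀ j : ℕ, ∀ h : j + 1 < n, f (v ⟨j + 1, h⟩) = v ⟨j, by omega⟩) (j : Fin n) :
    (f ^ ((j : ℕ) + 1)) (v j) = 0 := by
  obtain ⟨j, hj⟩ := j
  induction j with
  | zero => simpa using hbot hj
  | succ j ih =>
    rw [pow_succ, Module.End.mul_apply, hchain j hj]
    exact ih (by omega)

theorem Module.End.span_image_lt_eq_ker_pow [FiniteDimensional k V] {n : ℕ} {v : Fin n → V}
    (hv : LinearIndependent k v) {f : Module.End k V} (hf : finrank k (ker f) ≤ 1)
    (hnil : ∀ j : Fin n, (f ^ ((j : ℕ) + 1)) (v j) = 0) {i : ℕ} (hi : i ≤ n) :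
    span k (v '' {j | (j : ℕ) < i}) = ker (f ^ i) := by
  have hle : span k (v '' {j | (j : ℕ) < i}) ≤ ker (f ^ i) := by
    rw [span_le]
    rintro _ ⟨j, hj, rfl⟩
    have hsplit : i = (i - ((j : ℕ) + 1)) + ((j : ℕ) + 1) := by
      have hji : (j : ℕ) < i := hj
      omega
    rw [SetLike.mem_coe, mem_ker, hsplit, pow_add, Module.End.mul_apply, hnil j, map_zero]
  have himage : v '' {j | (j : ℕ) < i} = Set.range (v ∘ Fin.castLE hi) := by
    ext x
    constructor
    · rintro ⟨j, hj, rfl⟩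
      exact ⟨⟨j, hj⟩, rfl⟩
    · rintro ⟨t, rfl⟩
      exact ⟨Fin.castLE hi t, t.2, rfl⟩
  have hfinrank : finrank k (span k (v '' {j | (j : ℕ) < i})) = i := by
    rw [himage, finrank_span_eq_card (hv.comp _ (Fin.castLE_injective hi)), Fintype.card_fin]
  refine eq_of_le_of_finrank_le hle ?_
  calc finrank k (ker (f ^ i)) ≤ i * finrank k (ker f) := f.finrank_ker_pow_le i
    _ ≤ i := by simpa using Nat.mul_le_mul_left i hf
    _ = _ := hfinrank.symm

end JordanChain

section ArtinSchreier

variable (R : Type*) [CommRing R] [Algebra (ZMod 2) R]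

noncomputable def artinSchreier : Module.End (ZMod 2) R :=
  (FiniteField.frobeniusAlgHom (ZMod 2) R).toLinearMap - LinearMap.id

variable {R}

theorem artinSchreier_apply (x : R) : artinSchreier R x = x ^ 2 - x := by
  simp [artinSchreier]

theorem ker_artinSchreier [IsDomain R] : ker (artinSchreier R) = span (ZMod 2) {1} := by
  ext x
  rw [mem_ker, artinSchreier_apply, mem_span_singleton]
  constructor
  · intro hx
    have hroots : x * (x - 1) = 0 := by linear_combination hx
    rcases mul_eq_zero.1 hroots with h | h
    · exact ⟨0, by simp [h]⟩
    · exact ⟨1, by rw [one_smul]; linear_combination -h⟩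
  · rintro ⟨a, rfl⟩
    have ha : a ^ 2 = a := by revert a; decide
    rw [Algebra.smul_def, mul_one, ← map_pow, ha, sub_self]

theorem finrank_ker_artinSchreier [IsDomain R] : finrank (ZMod 2) (ker (artinSchreier R)) = 1 := by
  rw [ker_artinSchreier, finrank_span_singleton one_ne_zero]

theorem span_cantor_eq_ker_artinSchreier_pow {K : Type*} [Field K] [Algebra (ZMod 2) K]
    [FiniteDimensional (ZMod 2) K] {n : ℕ} {v : Fin n → K} (hv : LinearIndependent (ZMod 2) v)
    (hv1 : ∀ h : 0 < n, v ⟨0, h⟩ = 1)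
    (hcantor : ∀ j : ℕ, ∀ h : j + 1 < n, v ⟨j + 1, h⟩ ^ 2 - v ⟨j + 1, h⟩ = v ⟨j, by omega⟩)
    {i : ℕ} (hi : i ≤ n) :
    span (ZMod 2) (v '' {j | (j : ℕ) < i}) = ker (artinSchreier K ^ i) := by
  refine Module.End.span_image_lt_eq_ker_pow hv finrank_ker_artinSchreier.le ?_ hi
  refine Module.End.pow_succ_apply_eq_zero_of_chain (fun h => ?_) hcantor
  rw [artinSchreier_apply, hv1 h]
  ring

end ArtinSchreier

/-- The subspaces `Wᵢ = span(β₁, …, βᵢ)` determined by a Cantor basis of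
`GF(2^(2^L))` do not depend on the choice of the Cantor basis. -/
theorem cantor_subspaces_unique (L : ℕ)
    (b c : Module.Basis (Fin (2 ^ L)) (ZMod 2) (GaloisField 2 (2 ^ L)))
    (hb1 : b ⟨0, by positivity⟩ = 1)
    (hb : ∀ i : ℕ, ∀ h : i + 1 < 2 ^ L,
      (b ⟨i + 1, h⟩) ^ 2 - b ⟨i + 1, h⟩ = b ⟨i, by omega⟩)
    (hc1 : c ⟨0, by positivity⟩ = 1)
    (hc : ∀ i : ℕ, ∀ h : i + 1 < 2 ^ L,
      (c ⟨i + 1, h⟩) ^ 2 - c ⟨i + 1, h⟩ = c ⟨i, by omega⟩) :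
    ∀ i : ℕ, i ≤ 2 ^ L →
      Submodule.span (ZMod 2) (b '' {j : Fin (2 ^ L) | (j : ℕ) < i}) =
      Submodule.span (ZMod 2) (c '' {j : Fin (2 ^ L) | (j : ℕ) < i}) := by
  intro i hi
  rw [span_cantor_eq_ker_artinSchreier_pow b.linearIndependent (fun _ => hb1) hb hi,
    span_cantor_eq_ker_artinSchreier_pow c.linearIndependent (fun _ => hc1) hc hi]
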